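/- Let G be a finite simple graph, let c be a proper coloring of G with color set C, and suppose there is an orientation of the edges of G, given by a map head assigning to every edge e one of its two endpoints, such that every vertex of G is the head of an odd number of edges. Define a coloring c• of the subdivision G• by c•(v) = c(v) for each original vertex v ∈ V(G) and c•(e) = c(head(e)) for each edge-vertex e ∈ E(G). Then every color class of c• is an odd set of G•; in particular, if c uses q colors then G• admits an odd q-coloring. -/

import Mathlib

/-- A set `S` of vertices of `G` is *odd* if every vertex of `S` has an odd number of
neighbors inside `S`. -/
def SimpleGraph.IsOddSet {V : Type*} (G : SimpleGraph V) (S : Set V) : Prop :=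
  ∀ v ∈ S, Odd (S ∩ G.neighborSet v).ncard

/-- The subdivision `G•` of a graph `G`: its vertices are the vertices of `G` together
with one new vertex for each edge of `G`, and a vertex `v` is adjacent to an edge-vertex
`e` iff `v` is an endpoint of `e`; there are no other adjacencies. -/
def SimpleGraph.Subdiv {V : Type*} (G : SimpleGraph V) :
    SimpleGraph (V ⊕ G.edgeSet) where
  Adj a b :=
    (∃ (v : V) (e : G.edgeSet), a = Sum.inl v ∧ b = Sum.inr e ∧ v ∈ (e : Sym2 V)) ∨
    (∃ (v : V) (e : G.edgeSet), b = Sum.inl v ∧ a = Sum.inr e ∧ v ∈ (e : Sym2 V))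
  symm := ⟨fun _ _ h => h.symm⟩
  loopless := ⟨by
    rintro a (⟨v, e, h1, h2, _⟩ | ⟨v, e, h1, h2, _⟩) <;> rw [h1] at h2 <;>
      cases h2⟩

/-- Let `c` be a proper coloring of `G` and let `head` be an orientation of the edges of
`G` (assigning to each edge one of its endpoints) such that every vertex is the head of an
odd number of edges. Then the coloring of the subdivision `G•` that keeps the color of
every original vertex and gives each edge-vertex the color of the head of its edge has all
of its color classes odd sets of `G•`; in particular, if `c` uses `q` colors, then `G•`
admits an odd `q`-coloring. -/
theorem stmt11 {V : Type*} {C : Type*} [Fintype V] (G : SimpleGraph V)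
    (c : V → C) (hc : ∀ u v : V, G.Adj u v → c u ≠ c v)
    (head : G.edgeSet → V) (hhead : ∀ e : G.edgeSet, head e ∈ (e : Sym2 V))
    (hodd : ∀ v : V, Odd {e : G.edgeSet | head e = v}.ncard) :
    ∀ k : C, G.Subdiv.IsOddSet {x | Sum.elim c (fun e => c (head e)) x = k} := by
  intro k x hx
  have key : ∀ (a b : V) (e : Sym2 V), e ∈ G.edgeSet → a ∈ e → b ∈ e → a ≠ b → G.Adj a b := by
    intro a b e he ha hb hab
    have heq : e = s(a, b) := (Sym2.mem_and_mem_iff hab).mp ⟨ha, hb⟩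
    rw [heq] at he
    exact G.mem_edgeSet.mp he
  obtain (v | e) := x
  · simp only [Set.mem_setOf_eq, Sum.elim_inl] at hx
    have hset : {x | Sum.elim c (fun e => c (head e)) x = k} ∩ G.Subdiv.neighborSet (Sum.inl v)
        = Sum.inr '' {e : G.edgeSet | head e = v} := by
      ext y
      constructor
      · rintro ⟨hy1, hy2⟩
        rcases hy2 with ⟨v', e, h1, h2, hm⟩ | ⟨v', e, h1, h2, hm⟩
        · obtain rfl : v = v' := Sum.inl.inj h1
          subst h2
          simp only [Set.mem_setOf_eq, Sum.elim_inr] at hy1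
          refine ⟨e, ?_, rfl⟩
          by_contra hne
          exact hc v (head e) (key v (head e) e e.2 hm (hhead e) (Ne.symm hne))
            (hx.trans hy1.symm)
        · exact absurd h2 (by simp)
      · rintro ⟨e, he, rfl⟩
        refine ⟨?_, Or.inl ⟨v, e, rfl, rfl, he ▸ hhead e⟩⟩
        simp only [Set.mem_setOf_eq] at he
        simp only [Set.mem_setOf_eq, Sum.elim_inr, he, hx]
    rw [hset, Set.ncard_image_of_injective _ Sum.inr_injective]
    exact hodd v
  · simp only [Set.mem_setOf_eq, Sum.elim_inr] at hx
    have hset : {x | Sum.elim c (fun e => c (head e)) x = k} ∩ G.Subdiv.neighborSet (Sum.inr e)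
        = {Sum.inl (head e)} := by
      ext y
      constructor
      · rintro ⟨hy1, hy2⟩
        rcases hy2 with ⟨v', e', h1, h2, hm⟩ | ⟨v', e', h1, h2, hm⟩
        · exact absurd h1 (by simp)
        · obtain rfl : e = e' := Sum.inr.inj h2
          subst h1
          simp only [Set.mem_setOf_eq, Sum.elim_inl] at hy1
          have hv : v' = head e := by
            by_contra hne
            exact hc v' (head e) (key v' (head e) e e.2 hm (hhead e) hne)
              (hy1.trans hx.symm)
          simp [hv]
      · rintro rfl
        exact ⟨by simp [hx], Or.inr ⟨head e, e, rfl, rfl, hhead e⟩⟩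
    rw [hset]
    simp
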